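/- arXiv:1212.2813 — 2 statements merged into one kernel-verified Lean document; each statement's English description precedes it below -/
import Mathlib

section
/- For all real numbers z₁, z₂ and l with 0 ≤ z₁ ≤ l, 0 ≤ z₂ ≤ l and 0 < l, one has ( z₁/(l + √(l² − z₁²)) )^l · ( z₂/(l + √(l² − z₂²)) )^l · exp( √(l² − z₁²) + √(l² − z₂²) ) ≤ ( e²·z₁·z₂/(4l²) )^l, where e = exp 1. -/
/-!
Each of the two factors is bounded separately: with `0 ≤ S ≤ l` standing for `√(l² − z²)`,
`(z/(l+S))^l e^S = ((z/(l+S)) e^{S/l})^l`, and `e^t ≤ e(1+t)/2` on `[0, 1]` (the chord of `exp`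
over `[0, 1]` lies below this line because `e ≥ 2`) turns `e^{S/l}` into `e(l+S)/(2l)`,
cancelling the denominator `l + S`.
-/

open Real

lemma exp_le_exp_one_mul_one_add_div_two {t : ℝ} (ht₀ : 0 ≤ t) (ht₁ : t ≤ 1) :
    exp t ≤ exp 1 * (1 + t) / 2 := by
  have chord : exp t ≤ (1 - t) * exp 0 + t * exp 1 := by
    simpa using convexOn_exp.2 (Set.mem_univ 0) (Set.mem_univ 1) (by linarith) ht₀ (by ring)
  have two_le_e : 2 ≤ exp 1 := by linarith [add_one_le_exp 1]
  rw [exp_zero] at chord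
  nlinarith

lemma div_add_mul_exp_div_le {z S l : ℝ} (hz : 0 ≤ z) (hS : 0 ≤ S) (hSl : S ≤ l) (hl : 0 < l) :
    z / (l + S) * exp (S / l) ≤ exp 1 * z / (2 * l) := by
  have hexp : exp (S / l) ≤ exp 1 * (1 + S / l) / 2 :=
    exp_le_exp_one_mul_one_add_div_two (div_nonneg hS hl.le) ((div_le_one hl).2 hSl)
  calc z / (l + S) * exp (S / l) ≤ z / (l + S) * (exp 1 * (1 + S / l) / 2) := by gcongr
    _ = exp 1 * z / (2 * l) := by field_simp

lemma div_add_rpow_mul_exp_le {z S l : ℝ} (hz : 0 ≤ z) (hS : 0 ≤ S) (hSl : S ≤ l) (hl : 0 < l) :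
    (z / (l + S)) ^ l * exp S ≤ (exp 1 * z / (2 * l)) ^ l := by
  have hexp : exp S = exp (S / l) ^ l := by
    rw [← exp_mul, div_mul_cancel₀ S hl.ne']
  rw [hexp, ← mul_rpow (by positivity) (exp_pos _).le]
  exact rpow_le_rpow (by positivity) (div_add_mul_exp_div_le hz hS hSl hl) hl.le

lemma sqrt_sq_sub_sq_le (z : ℝ) {l : ℝ} (hl : 0 ≤ l) : √(l ^ 2 - z ^ 2) ≤ l :=
  sqrt_le_iff.2 ⟨hl, by linarith [sq_nonneg z]⟩

theorem debye_relaxation_two_factor_general (z₁ z₂ l : ℝ)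
    (hz₁ : 0 ≤ z₁) (hz₂ : 0 ≤ z₂) (hl : 0 < l) :
    (z₁ / (l + Real.sqrt (l ^ 2 - z₁ ^ 2))) ^ l *
        (z₂ / (l + Real.sqrt (l ^ 2 - z₂ ^ 2))) ^ l *
        Real.exp (Real.sqrt (l ^ 2 - z₁ ^ 2) + Real.sqrt (l ^ 2 - z₂ ^ 2)) ≤
      (Real.exp 1 ^ 2 * z₁ * z₂ / (4 * l ^ 2)) ^ l := by
  have factor (z : ℝ) (hz : 0 ≤ z) := div_add_rpow_mul_exp_le hz (sqrt_nonneg (l ^ 2 - z ^ 2))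
    (sqrt_sq_sub_sq_le z hl.le) hl
  have hrhs : (exp 1 ^ 2 * z₁ * z₂ / (4 * l ^ 2)) ^ l
      = (exp 1 * z₁ / (2 * l)) ^ l * (exp 1 * z₂ / (2 * l)) ^ l := by
    rw [← mul_rpow (by positivity) (by positivity)]
    congr 1
    field_simp
    ring
  rw [hrhs, exp_add, mul_mul_mul_comm]
  exact mul_le_mul (factor z₁ hz₁) (factor z₂ hz₂) (by positivity) (by positivity)

/-- Two-factor relaxation of the Debye-type bound:
`(z₁/(l+√(l²−z₁²)))^l (z₂/(l+√(l²−z₂²)))^l e^{√(l²−z₁²)+√(l²−z₂²)} ≤ (e² z₁ z₂/(4l²))^l`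
for `0 ≤ z₁ ≤ l`, `0 ≤ z₂ ≤ l`, `0 < l` (real exponent: `x ^ l` is `Real.rpow`). -/
theorem debye_relaxation_two_factor (z₁ z₂ l : ℝ)
    (hz₁ : 0 ≤ z₁) (hz₁l : z₁ ≤ l) (hz₂ : 0 ≤ z₂) (hz₂l : z₂ ≤ l) (hl : 0 < l) :
    (z₁ / (l + Real.sqrt (l ^ 2 - z₁ ^ 2))) ^ l *
        (z₂ / (l + Real.sqrt (l ^ 2 - z₂ ^ 2))) ^ l *
        Real.exp (Real.sqrt (l ^ 2 - z₁ ^ 2) + Real.sqrt (l ^ 2 - z₂ ^ 2)) ≤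
      (Real.exp 1 ^ 2 * z₁ * z₂ / (4 * l ^ 2)) ^ l :=
  debye_relaxation_two_factor_general z₁ z₂ l hz₁ hz₂ hl
end

section
/- For all real numbers a and b, and with j_l(z) = z^l / (2^{l+1} · l!) · ∫_{-1}^{1} cos(z t) · (1 − t²)^l dt denoting the Poisson integral representation of the spherical Bessel function of the first kind, the function l ↦ (2l+1)·j_l(a)·j_l(b) is summable over the natural numbers l. -/
/-!
Bounding `|cos (z t) (1 - t²)^l| ≤ 1` on `[-1, 1]` gives `|j_l(z)| ≤ |z|^l / (2^l l!)`. Since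
`2l + 1 ≤ 4^l` (Bernoulli), the `l`-th term of the series is then at most `(|a| |b|)^l / l!²`,
and the series is dominated by the exponential series of `|a| |b|`.
-/

/-- Poisson integral representation of the spherical Bessel function of the first kind. -/
noncomputable def sphericalBessel (l : ℕ) (z : ℝ) : ℝ :=
  z ^ l / (2 ^ (l + 1) * l.factorial) *
    ∫ t in (-1 : ℝ)..1, Real.cos (z * t) * (1 - t ^ 2) ^ l

open Real Set

lemma abs_cos_mul_one_sub_sq_pow_le_one {z t : ℝ} (ht : t ∈ Icc (-1 : ℝ) 1) (l : ℕ) :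
    |cos (z * t) * (1 - t ^ 2) ^ l| ≤ 1 := by
  have hsq : t ^ 2 ≤ 1 := by nlinarith [ht.1, ht.2]
  have hpow : |(1 - t ^ 2) ^ l| ≤ 1 := by
    rw [abs_of_nonneg (pow_nonneg (by linarith) l)]
    exact pow_le_one₀ (by linarith) (by nlinarith [sq_nonneg t])
  simpa [abs_mul] using mul_le_one₀ (abs_cos_le_one _) (abs_nonneg _) hpow

lemma abs_integral_cos_mul_one_sub_sq_pow_le_two (z : ℝ) (l : ℕ) :
    |∫ t in (-1 : ℝ)..1, cos (z * t) * (1 - t ^ 2) ^ l| ≤ 2 := by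
  have h := intervalIntegral.norm_integral_le_of_norm_le_const
    (a := -1) (b := 1) (C := 1) (f := fun t => cos (z * t) * (1 - t ^ 2) ^ l)
    fun t ht => abs_cos_mul_one_sub_sq_pow_le_one (Ioc_subset_Icc_self (by simpa using ht)) l
  norm_num at h
  exact h

lemma abs_sphericalBessel_le (l : ℕ) (z : ℝ) :
    |sphericalBessel l z| ≤ |z| ^ l / (2 ^ l * l.factorial) := by
  have hcoeff : |z ^ l / (2 ^ (l + 1) * l.factorial)| = |z| ^ l / (2 ^ (l + 1) * l.factorial) := by
    rw [abs_div, abs_pow, abs_of_pos (by positivity : (0 : ℝ) < 2 ^ (l + 1) * l.factorial)]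
  calc |sphericalBessel l z|
      = |z| ^ l / (2 ^ (l + 1) * l.factorial) *
          |∫ t in (-1 : ℝ)..1, cos (z * t) * (1 - t ^ 2) ^ l| := by
        rw [sphericalBessel, abs_mul, hcoeff]
    _ ≤ |z| ^ l / (2 ^ (l + 1) * l.factorial) * 2 :=
        mul_le_mul_of_nonneg_left (abs_integral_cos_mul_one_sub_sq_pow_le_two z l) (by positivity)
    _ = |z| ^ l / (2 ^ l * l.factorial) := by rw [pow_succ]; field_simp

lemma two_mul_add_one_le_four_pow (l : ℕ) : 2 * (l : ℝ) + 1 ≤ 4 ^ l := by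
  have h := one_add_mul_le_pow (a := (3 : ℝ)) (by norm_num) l
  norm_num at h
  linarith [(l.cast_nonneg : (0 : ℝ) ≤ l)]

lemma abs_bessel_series_term_le (l : ℕ) (a b : ℝ) :
    |(2 * (l : ℝ) + 1) * sphericalBessel l a * sphericalBessel l b| ≤
      (|a| * |b|) ^ l / l.factorial := by
  have hfac : (1 : ℝ) ≤ l.factorial := by exact_mod_cast l.factorial_pos
  calc |(2 * (l : ℝ) + 1) * sphericalBessel l a * sphericalBessel l b|
      = (2 * (l : ℝ) + 1) * |sphericalBessel l a| * |sphericalBessel l b| := by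
        rw [abs_mul, abs_mul, abs_of_nonneg (by positivity : (0 : ℝ) ≤ 2 * l + 1)]
    _ ≤ 4 ^ l * (|a| ^ l / (2 ^ l * l.factorial)) * (|b| ^ l / (2 ^ l * l.factorial)) := by
        gcongr
        · exact two_mul_add_one_le_four_pow l
        · exact abs_sphericalBessel_le l a
        · exact abs_sphericalBessel_le l b
    _ = (|a| * |b|) ^ l / l.factorial / l.factorial := by
        rw [show (4 : ℝ) ^ l = 2 ^ l * 2 ^ l by rw [← mul_pow]; norm_num, mul_pow]
        field_simp
    _ ≤ (|a| * |b|) ^ l / l.factorial := div_le_self (by positivity) hfac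

/-- The series `∑_l (2l+1) j_l(a) j_l(b)` is (absolutely) summable. -/
theorem summable_bessel_series (a b : ℝ) :
    Summable (fun l : ℕ => (2 * (l : ℝ) + 1) * sphericalBessel l a * sphericalBessel l b) :=
  .of_norm_bounded (summable_pow_div_factorial (|a| * |b|))
    fun l => abs_bessel_series_term_le l a b
end
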